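/- Let d, k ≥ 2, and let α(d,k) denote the independence number of the de Bruijn graph B(d,k), whose vertices are strings of length k over an alphabet of size d, with an edge from u to v whenever the last k−1 letters of u equal the first k−1 letters of v. Then α(d,k) equals the maximum over subsets A ⊆ dᵏ⁻¹ (sets of strings of length k−1) of the number of strings x ∈ dᵏ such that (x₀,…,x_{k−2}) ∈ A and (x₁,…,x_{k−1}) ∉ A. -/
import Mathlib


open Finset

/-- Adjacency in the de Bruijn graph `B(d,k)`: there is an edge from `u` to `v`
iff the last `k-1` letters of `u` equal the first `k-1` letters of `v`. -/
def deBruijnAdj (d k : ℕ) (hk : 2 ≤ k) (u v : Fin k → Fin d) : Prop :=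
  ∀ i : Fin (k - 1), u ⟨i.1 + 1, by omega⟩ = v ⟨i.1, by omega⟩

/-- The independence number of `B(d,k)`: the largest cardinality of a set of
vertices no two of which (including a vertex with itself) are joined by an edge. -/
noncomputable def deBruijnIndep (d k : ℕ) (hk : 2 ≤ k) : ℕ :=
  sSup {n : ℕ | ∃ S : Finset (Fin k → Fin d),
    (∀ u ∈ S, ∀ v ∈ S, ¬ deBruijnAdj d k hk u v) ∧ S.card = n}

/-- the independence number of the de Bruijn graph equals the maximum,
over sets `A` of strings of length `k-1`, of the number of strings `x` of length `k`
whose prefix lies in `A` and whose suffix does not. -/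
theorem stmt_8 (d k : ℕ) (hd : 2 ≤ d) (hk : 2 ≤ k) :
    deBruijnIndep d k hk =
      sSup {n : ℕ | ∃ A : Finset (Fin (k - 1) → Fin d),
        n = (Finset.univ.filter (fun x : Fin k → Fin d =>
          (fun i => x (Fin.castLE (by omega) i)) ∈ A ∧
          (fun i : Fin (k - 1) => x ⟨i.1 + 1, by omega⟩) ∉ A)).card} := by
  have hbR : BddAbove {n : ℕ | ∃ A : Finset (Fin (k - 1) → Fin d),
      n = (Finset.univ.filter (fun x : Fin k → Fin d =>
        (fun i => x (Fin.castLE (by omega) i)) ∈ A ∧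
        (fun i : Fin (k - 1) => x ⟨i.1 + 1, by omega⟩) ∉ A)).card} := by
    refine ⟨Fintype.card (Fin k → Fin d), ?_⟩
    rintro m ⟨A, rfl⟩
    exact (card_filter_le _ _).trans_eq card_univ
  have hbL : BddAbove {n : ℕ | ∃ S : Finset (Fin k → Fin d),
      (∀ u ∈ S, ∀ v ∈ S, ¬ deBruijnAdj d k hk u v) ∧ S.card = n} := by
    refine ⟨Fintype.card (Fin k → Fin d), ?_⟩
    rintro m ⟨S, _, rfl⟩
    exact S.card_le_univ.trans_eq card_univ
  unfold deBruijnIndep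
  apply le_antisymm
  · refine csSup_le ⟨0, ∅, by simp, by simp⟩ ?_
    rintro n ⟨S, hS, rfl⟩
    set A : Finset (Fin (k - 1) → Fin d) :=
      S.image (fun x => fun i => x (Fin.castLE (by omega : k - 1 ≤ k) i)) with hA
    have hsub : S ⊆ Finset.univ.filter (fun x : Fin k → Fin d =>
        (fun i => x (Fin.castLE (by omega) i)) ∈ A ∧
        (fun i : Fin (k - 1) => x ⟨i.1 + 1, by omega⟩) ∉ A) := by
      intro x hx
      simp only [mem_filter, mem_univ, true_and]
      constructor
      · exact mem_image_of_mem _ hx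
      · intro hmem
        rw [hA, mem_image] at hmem
        obtain ⟨v, hv, hvx⟩ := hmem
        refine hS x hx v hv ?_
        intro i
        exact (congrFun hvx i).symm
    exact le_trans (card_le_card hsub) (le_csSup hbR ⟨A, rfl⟩)
  · refine csSup_le ⟨0, ∅, by simp⟩ ?_
    rintro n ⟨A, rfl⟩
    refine le_csSup hbL ⟨_, ?_, rfl⟩
    intro u hu v hv hadj
    simp only [mem_filter, mem_univ, true_and] at hu hv
    apply hu.2
    have he : (fun i : Fin (k - 1) => u ⟨i.1 + 1, by omega⟩) =
        (fun i : Fin (k - 1) => v (Fin.castLE (by omega) i)) := by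
      funext i
      exact hadj i
    rw [he]
    exact hv.1
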